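/- Let G be a finite 3-connected simple graph, let S = {x, y, z} be a 3-cut of G, and suppose G − S consists of exactly two components C₁ and C₂. For i = 1, 2, let F_i be a fan of minimum order among all c–S fans in G[V(C_i) ∪ S] and among all vertices c of C_i. If V(C₁) ∪ S ≠ V(F₁) and V(C₂) ∪ S ≠ V(F₂), then G has at least two contractible non-edges. -/

import Mathlib

open SimpleGraph

variable {V : Type*}

/-- A graph is `k`-connected: it has at least `k+1` vertices, and removing any set of
fewer than `k` vertices leaves a connected graph. -/
def KConnected (k : ℕ) (G : SimpleGraph V) : Prop :=
  k + 1 ≤ Nat.card V ∧ ∀ S : Set V, S.ncard < k → (G.induce Sᶜ).Connected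

/-- Contraction of the non-edge `{u, v}`: `u` and `v` are replaced by a single
vertex (represented here by `u`), adjacent to every vertex that was adjacent to
`u` or to `v`. -/
def contractNonEdge (G : SimpleGraph V) (u v : V) : SimpleGraph {w : V // w ≠ v} where
  Adj a b := a ≠ b ∧ (G.Adj a.1 b.1 ∨ (a.1 = u ∧ G.Adj v b.1) ∨ (b.1 = u ∧ G.Adj a.1 v))
  symm := by
    constructor
    rintro a b ⟨hab, h | ⟨h1, h2⟩ | ⟨h1, h2⟩⟩
    · exact ⟨hab.symm, Or.inl h.symm⟩
    · exact ⟨hab.symm, Or.inr (Or.inr ⟨h1, h2.symm⟩)⟩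
    · exact ⟨hab.symm, Or.inr (Or.inl ⟨h1, h2.symm⟩)⟩
  loopless := ⟨fun a h => h.1 rfl⟩

/-- `{u, v}` is a contractible non-edge of `G`: a non-edge whose contraction yields
a `3`-connected graph. -/
def IsContractibleNonEdge (G : SimpleGraph V) (u v : V) : Prop :=
  u ≠ v ∧ ¬ G.Adj u v ∧ KConnected 3 (contractNonEdge G u v)

/-- The set of contractible non-edges of `G`, as unordered pairs of vertices. -/
def contractibleNonEdges (G : SimpleGraph V) : Set (Sym2 V) :=
  {p | ∃ u v : V, p = s(u, v) ∧ IsContractibleNonEdge G u v}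

/-- `S` is a cut of `G`: deleting the vertices of `S` leaves a disconnected graph. -/
def IsCutSet (G : SimpleGraph V) (S : Set V) : Prop :=
  ¬ (G.induce Sᶜ).Preconnected

/-- `C` is the vertex set of a (connected) component of `G − S`. -/
def IsCompOf (G : SimpleGraph V) (S : Set V) (C : Set V) : Prop :=
  C.Nonempty ∧ C ⊆ Sᶜ ∧ (G.induce C).Connected ∧
    ∀ x ∈ C, ∀ y, y ∉ S → G.Adj x y → y ∈ C

/-- A `c`–`S` fan for a three-element set `S = {s1, s2, s3}` inside the induced
subgraph `G[A]`: three paths of `G` from `c ∉ S` to the three (distinct) vertices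
of `S`, pairwise sharing only the vertex `c`, each meeting `S` only in its final
endpoint, and with all their vertices inside `A`. -/
structure Fan3 (G : SimpleGraph V) (A : Set V) (c : V) (S : Set V) where
  s1 : V
  s2 : V
  s3 : V
  hS : S = {s1, s2, s3}
  h12 : s1 ≠ s2
  h13 : s1 ≠ s3
  h23 : s2 ≠ s3
  hc : c ∉ S
  p1 : G.Walk c s1
  p2 : G.Walk c s2
  p3 : G.Walk c s3
  hp1 : p1.IsPath
  hp2 : p2.IsPath
  hp3 : p3.IsPath
  hA1 : ∀ x ∈ p1.support, x ∈ A
  hA2 : ∀ x ∈ p2.support, x ∈ A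
  hA3 : ∀ x ∈ p3.support, x ∈ A
  hS1 : ∀ x ∈ p1.support, x ∈ S → x = s1
  hS2 : ∀ x ∈ p2.support, x ∈ S → x = s2
  hS3 : ∀ x ∈ p3.support, x ∈ S → x = s3
  hI12 : ∀ x ∈ p1.support, x ∈ p2.support → x = c
  hI13 : ∀ x ∈ p1.support, x ∈ p3.support → x = c
  hI23 : ∀ x ∈ p2.support, x ∈ p3.support → x = c

/-- The vertex set of a fan. -/
def Fan3.verts {G : SimpleGraph V} {A : Set V} {c : V} {S : Set V}
    (F : Fan3 G A c S) : Set V :=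
  {x | x ∈ F.p1.support ∨ x ∈ F.p2.support ∨ x ∈ F.p3.support}

/-- The order of a fan is its number of vertices. -/
noncomputable def Fan3.order {G : SimpleGraph V} {A : Set V} {c : V} {S : Set V}
    (F : Fan3 G A c S) : ℕ :=
  F.verts.ncard

/-!
A non-edge `{u, v}` of a 3-connected graph is contractible as soon as `G - {u, v, t}` is
connected for every vertex `t`. Pick `wᵢ ∈ Cᵢ` off the fan `Fᵢ`. For `T = {w₁, w₂, t}`, at most
two vertices of `T` lie in each `Cᵢ ∪ S`, so by 3-connectivity every vertex of `G - T` reaches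
`S ∖ T` inside its side, and the fan on the side not containing `t` joins `S ∖ T` to its centre;
so `{w₁, w₂}` is contractible. If `C₁ ∖ V(F₁)` has a second vertex, it pairs with `w₂` as well.
Otherwise, either every vertex of `S` has a neighbour in `C₁ - c₁` and `{c₁, w₂}` is
contractible, or some `s ∈ S` sees `C₁` only in `c₁` and `{w₁, s}` is contractible.
-/

namespace SimpleGraph

variable {W : Type*} {G : SimpleGraph V} {T T' : Set V} {a b c : V}

def ReachableAvoiding (G : SimpleGraph V) (T : Set V) (a b : V) : Prop :=
  ∃ w : G.Walk a b, ∀ x ∈ w.support, x ∉ T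

namespace ReachableAvoiding

lemma refl (ha : a ∉ T) : G.ReachableAvoiding T a a :=
  ⟨.nil, by simpa using ha⟩

lemma symm (h : G.ReachableAvoiding T a b) : G.ReachableAvoiding T b a :=
  let ⟨w, hw⟩ := h
  ⟨w.reverse, by simpa using hw⟩

lemma trans (h : G.ReachableAvoiding T a b) (h' : G.ReachableAvoiding T b c) :
    G.ReachableAvoiding T a c := by
  obtain ⟨w, hw⟩ := h
  obtain ⟨w', hw'⟩ := h'
  refine ⟨w.append w', fun x hx => ?_⟩
  rcases (Walk.mem_support_append_iff w w').1 hx with hx | hx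
  exacts [hw x hx, hw' x hx]

lemma notMem_left (h : G.ReachableAvoiding T a b) : a ∉ T :=
  let ⟨w, hw⟩ := h
  hw a w.start_mem_support

lemma notMem_right (h : G.ReachableAvoiding T a b) : b ∉ T :=
  let ⟨w, hw⟩ := h
  hw b w.end_mem_support

lemma mono (hT : T' ⊆ T) (h : G.ReachableAvoiding T a b) : G.ReachableAvoiding T' a b :=
  let ⟨w, hw⟩ := h
  ⟨w, fun x hx hxT => hw x hx (hT hxT)⟩

lemma map {G' : SimpleGraph W} (f : G →g G') {T : Set W}
    (h : G.ReachableAvoiding (f ⁻¹' T) a b) : G'.ReachableAvoiding T (f a) (f b) := by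
  obtain ⟨w, hw⟩ := h
  refine ⟨w.map f, ?_⟩
  simp only [Walk.support_map, List.mem_map]
  rintro _ ⟨x, hx, rfl⟩
  exact hw x hx

lemma exists_adj_of_mem_of_notMem {A : Set V} (h : G.ReachableAvoiding T a b) (ha : a ∈ A)
    (hb : b ∉ A) :
    ∃ k ∈ A, ∃ s ∉ A, s ∉ T ∧ G.Adj k s ∧ G.ReachableAvoiding (T ∪ Aᶜ) a k := by
  obtain ⟨w, hw⟩ := h
  induction w with
  | nil => exact absurd ha hb
  | @cons u v _ huv w ih =>
    have hu : u ∉ T ∪ Aᶜ := by simpa [ha] using hw u (by simp)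
    by_cases hv : v ∈ A
    · obtain ⟨k, hk, s, hs, hsT, hks, w', hw'⟩ :=
        ih hv hb fun x hx => hw x (List.mem_cons_of_mem _ hx)
      refine ⟨k, hk, s, hs, hsT, hks, .cons huv w', fun x hx => ?_⟩
      rcases List.mem_cons.1 hx with rfl | hx
      exacts [hu, hw' x hx]
    · exact ⟨u, ha, v, hv, hw v (by simp), huv, refl hu⟩

end ReachableAvoiding

lemma Adj.reachableAvoiding (h : G.Adj a b) (ha : a ∉ T) (hb : b ∉ T) :
    G.ReachableAvoiding T a b :=
  ⟨h.toWalk, by simp [ha, hb]⟩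

lemma reachable_induce_compl_iff {a b : ↥Tᶜ} :
    (G.induce Tᶜ).Reachable a b ↔ G.ReachableAvoiding T a b := by
  constructor
  · rintro ⟨w⟩
    let w' : G.Walk a b := w.map (Embedding.induce Tᶜ).toHom
    refine ⟨w', fun x hx => ?_⟩
    have hx : x ∈ (w.map (Embedding.induce Tᶜ).toHom).support := hx
    obtain ⟨y, -, rfl⟩ := List.mem_map.1 (by rwa [Walk.support_map] at hx)
    exact y.2
  · rintro ⟨w, hw⟩
    exact ⟨w.induce Tᶜ hw⟩

lemma preconnected_induce_compl_iff :
    (G.induce Tᶜ).Preconnected ↔ ∀ a b, a ∉ T → b ∉ T → G.ReachableAvoiding T a b :=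
  ⟨fun h a b ha hb => reachable_induce_compl_iff.1 (h ⟨a, ha⟩ ⟨b, hb⟩),
    fun h a b => reachable_induce_compl_iff.2 (h a b a.2 b.2)⟩

lemma preconnected_induce_compl_of_surjective {G' : SimpleGraph W} (f : G →g G')
    (hf : Function.Surjective f) {T : Set W} (h : (G.induce (f ⁻¹' T)ᶜ).Preconnected) :
    (G'.induce Tᶜ).Preconnected := by
  refine preconnected_induce_compl_iff.2 fun a b ha hb => ?_
  obtain ⟨a, rfl⟩ := hf a
  obtain ⟨b, rfl⟩ := hf b
  exact (preconnected_induce_compl_iff.1 h a b ha hb).map f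

lemma preconnected_induce_compl_of_forall_reachableAvoiding
    (h : ∀ a, a ∉ T → G.ReachableAvoiding T a c) : (G.induce Tᶜ).Preconnected :=
  preconnected_induce_compl_iff.2 fun a b ha hb => (h a ha).trans (h b hb).symm

lemma reachableAvoiding_of_encard_le_three {S : Set V} (hS : S.encard ≤ 3)
    (h : ∀ s ∈ S, ∃ s' ∈ S, s' ≠ s ∧ G.ReachableAvoiding T s s') {s s' : V} (hs : s ∈ S)
    (hs' : s' ∈ S) : G.ReachableAvoiding T s s' := by
  obtain ⟨σ, hσ, hσs, hsσ⟩ := h s hs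
  obtain ⟨τ, hτ, hτs', hs'τ⟩ := h s' hs'
  by_cases hss' : s = s'
  · exact hss' ▸ .refl hsσ.notMem_left
  by_cases hσs' : σ = s'
  · exact hσs' ▸ hsσ
  by_cases hτs : τ = s
  · exact hτs ▸ hs'τ.symm
  by_cases hτσ : τ = σ
  · exact hsσ.trans (hτσ ▸ hs'τ.symm)
  have h4 : ({s, s', σ, τ} : Set V).encard = 4 := by
    rw [Set.encard_insert_of_notMem, Set.encard_insert_of_notMem, Set.encard_pair (Ne.symm hτσ)]
    · rfl
    · simp [Ne.symm hσs', Ne.symm hτs']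
    · simp [hss', Ne.symm hσs, Ne.symm hτs]
  have := h4 ▸ Set.encard_le_encard (by simp [Set.insert_subset_iff, *] : {s, s', σ, τ} ⊆ S)
  exact absurd (this.trans hS) (by decide)

end SimpleGraph

lemma Set.ncard_pair_le {α : Type*} (a b : α) : ({a, b} : Set α).ncard ≤ 2 :=
  (Set.ncard_insert_le _ _).trans (by rw [Set.ncard_singleton])

lemma Set.ncard_inter_le_two {α : Type*} {x y z : α} {X : Set α} (h : x ∉ X ∨ y ∉ X ∨ z ∉ X) :
    (({x, y, z} : Set α) ∩ X).ncard ≤ 2 := by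
  rcases h with h | h | h
  · refine (Set.ncard_le_ncard (t := {y, z}) ?_).trans (Set.ncard_pair_le y z)
    rintro w ⟨rfl | rfl | rfl, hw⟩ <;> simp_all
  · refine (Set.ncard_le_ncard (t := {x, z}) ?_).trans (Set.ncard_pair_le x z)
    rintro w ⟨rfl | rfl | rfl, hw⟩ <;> simp_all
  · refine (Set.ncard_le_ncard (t := {x, y}) ?_).trans (Set.ncard_pair_le x y)
    rintro w ⟨rfl | rfl | rfl, hw⟩ <;> simp_all

lemma Set.exists_eq_insert_insert_of_ncard_le_three {α : Type*} [Finite α] {s : Set α} {a b : α}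
    (hs : s.ncard ≤ 3) (ha : a ∈ s) (hb : b ∈ s) (hab : a ≠ b) : ∃ c, s = {a, b, c} := by
  by_cases h : s ⊆ {a, b}
  · exact ⟨a, (h.trans (by simp [Set.insert_subset_iff])).antisymm
      (by simp [Set.insert_subset_iff, ha, hb])⟩
  obtain ⟨c, hc, hcab⟩ := Set.not_subset.1 h
  simp only [Set.mem_insert_iff, Set.mem_singleton_iff, not_or] at hcab
  refine ⟨c, (Set.eq_of_subset_of_ncard_le (by simp [Set.insert_subset_iff, ha, hb, hc]) ?_).symm⟩
  rw [Set.ncard_eq_three.2 ⟨a, b, c, hab, Ne.symm hcab.1, Ne.symm hcab.2, rfl⟩]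
  exact hs

section KConnected

variable {G : SimpleGraph V}

lemma KConnected.finite {k : ℕ} (hG : KConnected k G) : Finite V :=
  Nat.finite_of_card_ne_zero (by have := hG.1; omega)

lemma KConnected.reachableAvoiding {k : ℕ} (hG : KConnected k G) {T : Set V} (hT : T.ncard < k)
    {a b : V} (ha : a ∉ T) (hb : b ∉ T) : G.ReachableAvoiding T a b :=
  preconnected_induce_compl_iff.1 (hG.2 T hT).preconnected a b ha hb

/-- Only `K₄` is 3-connected on four vertices. -/
lemma KConnected.five_le_card (hG : KConnected 3 G) {u v : V} (huv : u ≠ v) (h : ¬G.Adj u v) :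
    5 ≤ Nat.card V := by
  have := hG.finite
  by_contra! hcard
  have hT : ({u, v}ᶜ : Set V).ncard < 3 := by
    rw [Set.ncard_compl, Set.ncard_pair huv]
    omega
  obtain ⟨w, hw⟩ := hG.reachableAvoiding hT (a := u) (b := v) (by simp) (by simp)
  cases w with
  | nil => exact huv rfl
  | @cons _ x _ hux w =>
    have hx : x ≠ u → x = v := by simpa using hw x (by simp)
    exact h (hx hux.ne.symm ▸ hux)

end KConnected

section Contraction

variable {G : SimpleGraph V} {u v : V}

open Classical in
noncomputable def contractNonEdgeHom (huv : u ≠ v) (h : ¬G.Adj u v) :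
    G →g contractNonEdge G u v where
  toFun w := if hw : w = v then ⟨u, huv⟩ else ⟨w, hw⟩
  map_rel' {a b} hab := by
    by_cases ha : a = v
    · subst ha
      have hbu : b ≠ u := fun hbu => h (hbu ▸ hab.symm)
      rw [dif_pos rfl, dif_neg hab.ne']
      exact ⟨fun e => hbu (congrArg Subtype.val e).symm, .inr (.inl ⟨rfl, hab⟩)⟩
    by_cases hb : b = v
    · subst hb
      have hau : a ≠ u := fun hau => h (hau ▸ hab)
      rw [dif_neg ha, dif_pos rfl]
      exact ⟨fun e => hau (congrArg Subtype.val e), .inr (.inr ⟨rfl, hab⟩)⟩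
    rw [dif_neg ha, dif_neg hb]
    exact ⟨fun e => hab.ne (congrArg Subtype.val e), .inl hab⟩

lemma contractNonEdgeHom_apply_of_ne (huv : u ≠ v) (h : ¬G.Adj u v) {w : V} (hw : w ≠ v) :
    contractNonEdgeHom huv h w = ⟨w, hw⟩ :=
  dif_neg hw

lemma contractNonEdgeHom_apply_self (huv : u ≠ v) (h : ¬G.Adj u v) :
    contractNonEdgeHom huv h v = ⟨u, huv⟩ :=
  dif_pos rfl

/-- Separators of `G / uv` pull back to separators of `G`: to at most two vertices, or to `u`, `v`
and at most one more. -/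
lemma isContractibleNonEdge_of_preconnected (hG : KConnected 3 G) (huv : u ≠ v)
    (h : ¬G.Adj u v) (hT : ∀ t, (G.induce {u, v, t}ᶜ).Preconnected) :
    IsContractibleNonEdge G u v := by
  have := hG.finite
  set f := contractNonEdgeHom huv h
  have hf : ∀ w (hw : w ≠ v), f w = ⟨w, hw⟩ := fun _ => contractNonEdgeHom_apply_of_ne huv h
  have hcard : Nat.card {w // w ≠ v} = Nat.card V - 1 := by
    rw [show Nat.card {w // w ≠ v} = ({v}ᶜ : Set V).ncard from Nat.card_coe_set_eq _,
      Set.ncard_compl, Set.ncard_singleton]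
  have h5 := hG.five_le_card huv h
  refine ⟨huv, h, by omega, fun S' hS' => ?_⟩
  have : Nonempty ↥S'ᶜ := (Set.nonempty_compl.2 fun hS => by
    rw [hS, Set.ncard_univ] at hS'; omega).to_subtype
  refine ⟨preconnected_induce_compl_of_surjective f (fun w => ⟨w.1, hf w.1 w.2⟩) ?_⟩
  by_cases hu : ⟨u, huv⟩ ∈ S'
  · have hsub : f ⁻¹' S' ⊆ insert v (Subtype.val '' S') := by
      intro w hw
      by_cases hwv : w = v
      · exact .inl hwv
      · exact .inr ⟨⟨w, hwv⟩, by simpa [hf w hwv] using hw, rfl⟩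
    obtain ⟨t, ht⟩ := Set.exists_eq_insert_insert_of_ncard_le_three
      ((Set.ncard_le_ncard hsub).trans ((Set.ncard_insert_le _ _).trans
        (by have := Set.ncard_image_le (f := Subtype.val) (s := S'); omega)))
      (a := u) (b := v) (by simpa [hf u huv]) (by simpa [f, contractNonEdgeHom_apply_self huv h])
      huv
    exact ht ▸ hT t
  · have hsub : f ⁻¹' S' ⊆ Subtype.val '' S' := by
      intro w hw
      by_cases hwv : w = v
      · exact absurd (hwv ▸ hw) (by simpa [f, contractNonEdgeHom_apply_self huv h])
      · exact ⟨⟨w, hwv⟩, by simpa [hf w hwv] using hw, rfl⟩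
    exact (hG.2 _ ((Set.ncard_le_ncard hsub).trans_lt
      ((Set.ncard_image_le (f := Subtype.val) (s := S')).trans_lt hS'))).preconnected

end Contraction

section Fan

variable {G : SimpleGraph V} {A S : Set V} {c : V}

namespace Fan3

lemma encard_eq_three (F : Fan3 G A c S) : S.encard = 3 :=
  Set.encard_eq_three.2 ⟨F.s1, F.s2, F.s3, F.h12, F.h13, F.h23, F.hS⟩

variable (F : Fan3 G A c S)

lemma verts_subset : F.verts ⊆ A := by
  rintro x (hx | hx | hx)
  exacts [F.hA1 x hx, F.hA2 x hx, F.hA3 x hx]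

lemma center_mem_verts : c ∈ F.verts :=
  Or.inl F.p1.start_mem_support

lemma finite_verts : F.verts.Finite :=
  (List.finite_toSet _).union ((List.finite_toSet _).union (List.finite_toSet _))

lemma exists_path {p : V} (hp : p ∈ F.verts) :
    ∃ s ∈ S, ∃ q : G.Walk c s, q.IsPath ∧ p ∈ q.support ∧ (∀ x ∈ q.support, x ∈ F.verts) ∧
      ∀ x ∈ q.support, x ∈ S → x = s := by
  rcases hp with hp | hp | hp
  · exact ⟨F.s1, by simp [F.hS], F.p1, F.hp1, hp, fun x hx => Or.inl hx, F.hS1⟩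
  · exact ⟨F.s2, by simp [F.hS], F.p2, F.hp2, hp, fun x hx => Or.inr (Or.inl hx), F.hS2⟩
  · exact ⟨F.s3, by simp [F.hS], F.p3, F.hp3, hp, fun x hx => Or.inr (Or.inr hx), F.hS3⟩

lemma subset_verts : S ⊆ F.verts := by
  intro x hx
  rw [F.hS] at hx
  rcases hx with rfl | rfl | rfl
  exacts [Or.inl F.p1.end_mem_support, Or.inr (Or.inl F.p2.end_mem_support),
    Or.inr (Or.inr F.p3.end_mem_support)]

variable {F}

lemma reachableAvoiding_center {T : Set V} (hTF : ∀ x ∈ T, x ∈ F.verts → x ∈ S) {s : V}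
    (hs : s ∈ S) (hsT : s ∉ T) : G.ReachableAvoiding T s c := by
  obtain ⟨s', -, q, -, hsq, hqF, hqS⟩ := F.exists_path (F.subset_verts hs)
  obtain rfl := hqS s hsq hs
  exact ReachableAvoiding.symm ⟨q, fun x hx hxT => hsT (hqS x hx (hTF x hxT (hqF x hx)) ▸ hxT)⟩

/-- Two vertices other than the centre block at most two of the three paths of a fan. -/
lemma exists_reachableAvoiding {T : Set V} (hc : c ∉ T) (hT : (T ∩ F.verts).ncard ≤ 2) :
    ∃ s ∈ S, s ∉ T ∧ G.ReachableAvoiding T c s := by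
  by_contra! hno
  have hit : ∀ {s} (q : G.Walk c s), s ∈ S → ∃ x ∈ q.support, x ∈ T := by
    intro s q hs
    by_contra! hq
    exact hno s hs (hq s q.end_mem_support) ⟨q, hq⟩
  obtain ⟨x₁, hx₁, hx₁T⟩ := hit F.p1 (by simp [F.hS])
  obtain ⟨x₂, hx₂, hx₂T⟩ := hit F.p2 (by simp [F.hS])
  obtain ⟨x₃, hx₃, hx₃T⟩ := hit F.p3 (by simp [F.hS])
  have hne : ∀ x ∈ T, x ≠ c := fun x hx h => hc (h ▸ hx)
  have h3 : ({x₁, x₂, x₃} : Set V).ncard = 3 := Set.ncard_eq_three.2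
    ⟨x₁, x₂, x₃, fun h => hne x₁ hx₁T (F.hI12 x₁ hx₁ (h ▸ hx₂)),
      fun h => hne x₁ hx₁T (F.hI13 x₁ hx₁ (h ▸ hx₃)),
      fun h => hne x₂ hx₂T (F.hI23 x₂ hx₂ (h ▸ hx₃)), rfl⟩
  have hsub : ({x₁, x₂, x₃} : Set V) ⊆ T ∩ F.verts := by
    rintro x (rfl | rfl | rfl)
    exacts [⟨hx₁T, Or.inl hx₁⟩, ⟨hx₂T, Or.inr (Or.inl hx₂)⟩, ⟨hx₃T, Or.inr (Or.inr hx₃)⟩]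
  have := Set.ncard_le_ncard hsub (F.finite_verts.inter_of_right T)
  omega

lemma reachableAvoiding_of_mem_verts {p : V} (hp : p ∈ F.verts) (hpS : p ∉ S) :
    G.ReachableAvoiding (S ∪ F.vertsᶜ) p c := by
  classical
  obtain ⟨s, hs, q, hq, hpq, hqF, hqS⟩ := F.exists_path hp
  refine ReachableAvoiding.symm ⟨q.takeUntil p hpq, fun x hx => ?_⟩
  have hxq := q.support_takeUntil_subset_support hpq hx
  rintro (hxS | hxF)
  · obtain rfl := hqS x hxq hxS
    exact Walk.endpoint_notMem_support_takeUntil hq hpq (fun h => hpS (h ▸ hs)) hx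
  · exact hxF (hqF x hxq)

end Fan3

variable {C : Set V}

lemma Fan3.center_mem (F : Fan3 G (C ∪ S) c S) : c ∈ C :=
  (F.verts_subset F.center_mem_verts).resolve_right F.hc

lemma Fan3.exists_mem_notMem_verts (F : Fan3 G (C ∪ S) c S) (h : C ∪ S ≠ F.verts) :
    ∃ w ∈ C, w ∉ F.verts := by
  by_contra! hC
  exact h (Set.union_subset hC F.subset_verts |>.antisymm F.verts_subset)

end Fan

lemma SimpleGraph.Reachable.mem_of_forall_adj {W : Type*} {H : SimpleGraph W} {P : Set W}
    (hP : ∀ a b, H.Adj a b → a ∈ P → b ∈ P) {a b : W} (h : H.Reachable a b) (ha : a ∈ P) :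
    b ∈ P := by
  obtain ⟨w⟩ := h
  induction w with
  | nil => exact ha
  | cons hadj _ ih => exact ih (hP _ _ hadj ha)

section Separation

variable {G : SimpleGraph V} {S C C' : Set V}

lemma IsCompOf.subset_of_mem (hC : IsCompOf G S C) (hC' : IsCompOf G S C') {x : V} (hx : x ∈ C)
    (hx' : x ∈ C') : C ⊆ C' := fun y hy =>
  (hC.2.2.1.preconnected ⟨x, hx⟩ ⟨y, hy⟩).mem_of_forall_adj (P := {z : C | z.1 ∈ C'})
    (fun a b hab ha => hC'.2.2.2 a.1 ha b.1 (hC.2.1 b.2) hab) (show x ∈ C' from hx')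

lemma IsCompOf.disjoint (hC : IsCompOf G S C) (hC' : IsCompOf G S C') (h : C ≠ C') :
    Disjoint C C' :=
  Set.disjoint_left.2 fun _ hx hx' =>
    h ((hC.subset_of_mem hC' hx hx').antisymm (hC'.subset_of_mem hC hx' hx))

structure IsSeparation (G : SimpleGraph V) (S A B : Set V) : Prop where
  union_eq : A ∪ B = Sᶜ
  disjoint : Disjoint A B
  not_adj : ∀ a ∈ A, ∀ b ∈ B, ¬G.Adj a b

namespace IsSeparation

variable {A B : Set V} {a x c cA cB : V}

lemma symm (h : IsSeparation G S A B) : IsSeparation G S B A :=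
  ⟨by rw [Set.union_comm, h.union_eq], h.disjoint.symm,
    fun b hb a ha hab => h.not_adj a ha b hb hab.symm⟩

lemma notMem_of_mem_left (h : IsSeparation G S A B) (ha : a ∈ A) : a ∉ S :=
  h.union_eq.subset (Or.inl ha)

lemma notMem_union_of_mem_left (h : IsSeparation G S A B) (ha : a ∈ A) : a ∉ B ∪ S := by
  rintro (hb | hs)
  exacts [Set.disjoint_left.1 h.disjoint ha hb, h.notMem_of_mem_left ha hs]

lemma ne_of_mem (h : IsSeparation G S A B) {b : V} (ha : a ∈ A) (hb : b ∈ B) : a ≠ b :=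
  fun hab => h.symm.notMem_union_of_mem_left hb (.inl (hab ▸ ha))

lemma mem_or_mem_or_mem (h : IsSeparation G S A B) (x : V) : x ∈ A ∨ x ∈ B ∨ x ∈ S := by
  by_cases hx : x ∈ S
  · exact .inr (.inr hx)
  · rw [← Set.mem_compl_iff, ← h.union_eq] at hx
    exact hx.imp_right .inl

lemma mem_of_adj (h : IsSeparation G S A B) (ha : a ∈ A) (hax : G.Adj a x) (hx : x ∉ A) :
    x ∈ S :=
  ((h.mem_or_mem_or_mem x).resolve_left hx).resolve_left fun hxB => h.not_adj a ha x hxB hax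

lemma notMem_verts (h : IsSeparation G S A B) (F : Fan3 G (B ∪ S) c S) (ha : a ∈ A) :
    a ∉ F.verts :=
  fun haF => h.notMem_union_of_mem_left ha (F.verts_subset haF)

lemma of_isCompOf {C₁ C₂ : Set V} (h₁ : IsCompOf G S C₁) (h₂ : IsCompOf G S C₂) (h : C₁ ≠ C₂)
    (hcover : C₁ ∪ C₂ = Sᶜ) : IsSeparation G S C₁ C₂ :=
  ⟨hcover, h₁.disjoint h₂ h, fun a ha b hb hab =>
    Set.disjoint_left.1 (h₁.disjoint h₂ h) (h₁.2.2.2 a ha b (h₂.2.1 hb) hab) hb⟩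

variable {T : Set V}

/-- 3-connectivity gives a walk from `a` to `B` avoiding `T ∩ (A ∪ S)`; it leaves `A` through
`S ∖ T`. -/
lemma exists_adj_of_ncard_inter_le_two (hG : KConnected 3 G) (h : IsSeparation G S A B)
    (hB : B.Nonempty) (hT : (T ∩ (A ∪ S)).ncard ≤ 2) (ha : a ∈ A) (haT : a ∉ T) :
    ∃ k ∈ A, ∃ s ∈ S, s ∉ T ∧ G.Adj k s ∧ G.ReachableAvoiding (T ∪ Aᶜ) a k := by
  obtain ⟨b, hb⟩ := hB
  have hab := hG.reachableAvoiding (T := T ∩ (A ∪ S)) (a := a) (b := b) (by omega)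
    (fun h' => haT h'.1) (fun h' => h.symm.notMem_union_of_mem_left hb h'.2)
  obtain ⟨k, hk, s, hsA, hsT, hks, hak⟩ :=
    hab.exists_adj_of_mem_of_notMem ha (fun hbA => h.symm.notMem_union_of_mem_left hb (.inl hbA))
  have hs : s ∈ S := h.mem_of_adj hk hks hsA
  refine ⟨k, hk, s, hs, fun hsT' => hsT ⟨hsT', .inr hs⟩, hks, hak.mono ?_⟩
  rintro x (hxT | hxA)
  · by_cases hxA : x ∈ A
    exacts [.inl ⟨hxT, .inl hxA⟩, .inr hxA]
  · exact .inr hxA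

lemma exists_reachableAvoiding_of_ncard_inter_le_two (hG : KConnected 3 G)
    (h : IsSeparation G S A B) (hB : B.Nonempty) (hT : (T ∩ (A ∪ S)).ncard ≤ 2) (ha : a ∈ A)
    (haT : a ∉ T) : ∃ s ∈ S, s ∉ T ∧ G.ReachableAvoiding T a s := by
  obtain ⟨k, -, s, hs, hsT, hks, hak⟩ := h.exists_adj_of_ncard_inter_le_two hG hB hT ha haT
  have hak : G.ReachableAvoiding T a k := hak.mono Set.subset_union_left
  exact ⟨s, hs, hsT, hak.trans (hks.reachableAvoiding hak.notMem_right hsT)⟩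

lemma preconnected_of_reachableAvoiding (hG : KConnected 3 G) (h : IsSeparation G S A B)
    (hA : A.Nonempty) (hB : B.Nonempty) (hTA : (T ∩ (A ∪ S)).ncard ≤ 2)
    (hTB : (T ∩ (B ∪ S)).ncard ≤ 2) (hc : ∀ s ∈ S, s ∉ T → G.ReachableAvoiding T s c) :
    (G.induce Tᶜ).Preconnected := by
  refine preconnected_induce_compl_of_forall_reachableAvoiding (c := c) fun x hxT => ?_
  obtain ⟨s, hs, hsT, hxs⟩ : ∃ s ∈ S, s ∉ T ∧ G.ReachableAvoiding T x s := by
    rcases h.mem_or_mem_or_mem x with hx | hx | hx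
    · exact h.exists_reachableAvoiding_of_ncard_inter_le_two hG hB hTA hx hxT
    · exact h.symm.exists_reachableAvoiding_of_ncard_inter_le_two hG hA hTB hx hxT
    · exact ⟨x, hx, hxT, .refl hxT⟩
  exact hxs.trans (hc s hs hsT)

lemma preconnected_of_fan (hG : KConnected 3 G) (h : IsSeparation G S A B)
    (F : Fan3 G (A ∪ S) c S) (hB : B.Nonempty) (hTA : (T ∩ (A ∪ S)).ncard ≤ 2)
    (hTB : (T ∩ (B ∪ S)).ncard ≤ 2) (hTF : ∀ x ∈ T, x ∈ F.verts → x ∈ S) :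
    (G.induce Tᶜ).Preconnected :=
  h.preconnected_of_reachableAvoiding hG ⟨c, F.center_mem⟩ hB hTA hTB
    fun _ hs hsT => F.reachableAvoiding_center hTF hs hsT

lemma isContractibleNonEdge_of_notMem_verts (hG : KConnected 3 G) (h : IsSeparation G S A B)
    (FA : Fan3 G (A ∪ S) cA S) (FB : Fan3 G (B ∪ S) cB S) {a b : V} (ha : a ∈ A)
    (haF : a ∉ FA.verts) (hb : b ∈ B) (hbF : b ∉ FB.verts) : IsContractibleNonEdge G a b := by
  refine isContractibleNonEdge_of_preconnected hG (h.ne_of_mem ha hb) (h.not_adj a ha b hb)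
    fun t => ?_
  have hTA := Set.ncard_inter_le_two (x := a) (z := t) (.inr (.inl
    (h.symm.notMem_union_of_mem_left hb)))
  have hTB := Set.ncard_inter_le_two (y := b) (z := t) (.inl (h.notMem_union_of_mem_left ha))
  by_cases ht : t ∈ A
  · refine h.symm.preconnected_of_fan hG FB ⟨a, ha⟩ hTB hTA ?_
    rintro x (rfl | rfl | rfl) hx
    exacts [absurd hx (h.notMem_verts FB ha), absurd hx hbF, absurd hx (h.notMem_verts FB ht)]
  · refine h.preconnected_of_fan hG FA ⟨b, hb⟩ hTA hTB ?_
    rintro x (rfl | rfl | rfl) hx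
    exacts [absurd hx haF, absurd hx (h.symm.notMem_verts FA hb),
      (FA.verts_subset hx).resolve_left ht]

/-- When `t ∈ B`, each vertex of `S` is linked to another one through `A - cA`; as `S` has
three vertices, it is then connected in `G - {cA, b, t}`. -/
lemma isContractibleNonEdge_center_of_forall_exists_adj (hG : KConnected 3 G)
    (h : IsSeparation G S A B) (FA : Fan3 G (A ∪ S) cA S) (FB : Fan3 G (B ∪ S) cB S) {b : V}
    (hb : b ∈ B) (hbF : b ∉ FB.verts) (hS : ∀ s ∈ S, ∃ k ∈ A, G.Adj k s ∧ k ≠ cA) :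
    IsContractibleNonEdge G cA b := by
  have hcA := FA.center_mem
  refine isContractibleNonEdge_of_preconnected hG (h.ne_of_mem hcA hb) (h.not_adj _ hcA b hb)
    fun t => ?_
  have hTA := Set.ncard_inter_le_two (x := cA) (z := t) (.inr (.inl
    (h.symm.notMem_union_of_mem_left hb)))
  have hTB := Set.ncard_inter_le_two (y := b) (z := t) (.inl (h.notMem_union_of_mem_left hcA))
  by_cases ht : t ∈ B
  · have hST : ∀ s ∈ S, s ∉ ({cA, b, t} : Set V) := by
      rintro s hs (rfl | rfl | rfl)
      exacts [h.notMem_of_mem_left hcA hs, h.symm.notMem_of_mem_left hb hs,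
        h.symm.notMem_of_mem_left ht hs]
    have hlink : ∀ s ∈ S, ∃ s' ∈ S, s' ≠ s ∧ G.ReachableAvoiding {cA, b, t} s s' := by
      intro s hs
      obtain ⟨k, hk, hks, hkc⟩ := hS s hs
      obtain ⟨k', -, s', hs', hs'T, hk's', hkk'⟩ := h.exists_adj_of_ncard_inter_le_two hG ⟨b, hb⟩
        ((Set.ncard_inter_le_ncard_left _ _).trans (Set.ncard_pair_le cA s)) hk
        (by rintro (rfl | rfl); exacts [hkc rfl, h.notMem_of_mem_left hk hs])
      have hkk' : G.ReachableAvoiding {cA, b, t} k k' := hkk'.mono (by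
        rintro x (rfl | rfl | rfl)
        exacts [.inl (.inl rfl), .inr (h.symm.notMem_union_of_mem_left hb ∘ .inl),
          .inr (h.symm.notMem_union_of_mem_left ht ∘ .inl)])
      refine ⟨s', hs', fun e => hs'T (.inr e), ?_⟩
      exact (hks.symm.reachableAvoiding (hST s hs) hkk'.notMem_left).trans
        (hkk'.trans (hk's'.reachableAvoiding hkk'.notMem_right (hST s' hs')))
    have hs₁ : FB.s1 ∈ S := by simp [FB.hS]
    exact h.preconnected_of_reachableAvoiding hG ⟨cA, hcA⟩ ⟨b, hb⟩ hTA hTB (c := FB.s1)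
      fun s hs _ => reachableAvoiding_of_encard_le_three FB.encard_eq_three.le hlink hs hs₁
  · refine h.symm.preconnected_of_fan hG FB ⟨cA, hcA⟩ hTB hTA ?_
    rintro x (rfl | rfl | rfl) hx
    exacts [absurd hx (h.notMem_verts FB hcA), absurd hx hbF,
      (FB.verts_subset hx).resolve_left ht]

/-- A vertex of `A` leaves `A ∖ {a, t}` through `S`; if it has to use `s₀`, it passes through
`cA`, and one of the two paths of `FA` missing `s₀` avoids `t`. -/
lemma preconnected_of_forall_adj_eq_center (hG : KConnected 3 G)
    (h : IsSeparation G S A B) (FA : Fan3 G (A ∪ S) cA S) (FB : Fan3 G (B ∪ S) cB S) {a s₀ t : V}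
    (ha : a ∈ A) (haF : a ∉ FA.verts) (hs₀ : s₀ ∈ S) (hs₀A : ∀ k ∈ A, G.Adj k s₀ → k = cA)
    (ht : t ∈ A) : (G.induce {a, s₀, t}ᶜ).Preconnected := by
  have hTF : ∀ x ∈ ({a, s₀, t} : Set V), x ∈ FB.verts → x ∈ S := by
    rintro x (rfl | rfl | rfl) hx
    exacts [absurd hx (h.notMem_verts FB ha), hs₀, absurd hx (h.notMem_verts FB ht)]
  refine preconnected_induce_compl_of_forall_reachableAvoiding (c := cB) fun x hxT => ?_
  obtain ⟨s, hs, hsT, hxs⟩ : ∃ s ∈ S, s ∉ ({a, s₀, t} : Set V) ∧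
      G.ReachableAvoiding {a, s₀, t} x s := by
    rcases h.mem_or_mem_or_mem x with hx | hx | hx
    · obtain ⟨k, hk, s, hs, hsT, hks, hxk⟩ := h.exists_adj_of_ncard_inter_le_two hG
        ⟨cB, FB.center_mem⟩ ((Set.ncard_inter_le_ncard_left _ _).trans (Set.ncard_pair_le a t))
        hx (by rintro (rfl | rfl) <;> simp at hxT)
      have hxk : G.ReachableAvoiding {a, s₀, t} x k := hxk.mono (by
        rintro y (rfl | rfl | rfl)
        exacts [.inl (.inl rfl), .inr (h.notMem_of_mem_left · hs₀), .inl (.inr rfl)])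
      by_cases hss₀ : s = s₀
      · obtain rfl : k = cA := hs₀A k hk (hss₀ ▸ hks)
        obtain ⟨s', hs', hs'T, hks'⟩ := FA.exists_reachableAvoiding hxk.notMem_right
          ((Set.ncard_le_ncard (t := {s₀, t}) (by
            rintro y ⟨rfl | rfl | rfl, hy⟩
            exacts [absurd hy haF, .inl rfl, .inr rfl])).trans (Set.ncard_pair_le s₀ t))
        exact ⟨s', hs', hs'T, hxk.trans hks'⟩
      · refine ⟨s, hs, ?_, hxk.trans (hks.reachableAvoiding hxk.notMem_right ?_)⟩ <;>
          rintro (rfl | rfl | rfl) <;> simp_all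
    · exact h.symm.exists_reachableAvoiding_of_ncard_inter_le_two hG ⟨cA, FA.center_mem⟩
        (Set.ncard_inter_le_two (.inl (h.notMem_union_of_mem_left ha))) hx hxT
    · exact ⟨x, hx, hxT, .refl hxT⟩
  exact hxs.trans (FB.reachableAvoiding_center hTF hs hsT)

/-- Every vertex of `A` other than `a` reaches `cA` along `FA`. -/
lemma preconnected_of_forall_notMem_verts_eq (hG : KConnected 3 G)
    (h : IsSeparation G S A B) (FA : Fan3 G (A ∪ S) cA S) {a s₀ t : V} (ha : a ∈ A)
    (haF : a ∉ FA.verts) (huniq : ∀ x ∈ A, x ∉ FA.verts → x = a) (hs₀ : s₀ ∈ S) (ht : t ∈ S) :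
    (G.induce {a, s₀, t}ᶜ).Preconnected := by
  have hTF : ∀ x ∈ ({a, s₀, t} : Set V), x ∈ FA.verts → x ∈ S := by
    rintro x (rfl | rfl | rfl) hx
    exacts [absurd hx haF, hs₀, ht]
  refine preconnected_induce_compl_of_forall_reachableAvoiding (c := cA) fun x hxT => ?_
  rcases h.mem_or_mem_or_mem x with hx | hx | hx
  · have hxF : x ∈ FA.verts := by
      by_contra hxF
      exact hxT (.inl (huniq x hx hxF))
    refine (FA.reachableAvoiding_of_mem_verts hxF (h.notMem_of_mem_left hx)).mono ?_
    rintro y (rfl | rfl | rfl)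
    exacts [.inr haF, .inl hs₀, .inl ht]
  · obtain ⟨s, hs, hsT, hxs⟩ := h.symm.exists_reachableAvoiding_of_ncard_inter_le_two hG
      ⟨cA, FA.center_mem⟩ (Set.ncard_inter_le_two (.inl (h.notMem_union_of_mem_left ha))) hx hxT
    exact hxs.trans (FA.reachableAvoiding_center hTF hs hsT)
  · exact FA.reachableAvoiding_center hTF hx hxT

lemma isContractibleNonEdge_of_forall_adj_eq_center (hG : KConnected 3 G)
    (h : IsSeparation G S A B) (FA : Fan3 G (A ∪ S) cA S) (FB : Fan3 G (B ∪ S) cB S) {a s₀ : V}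
    (ha : a ∈ A) (haF : a ∉ FA.verts) (huniq : ∀ x ∈ A, x ∉ FA.verts → x = a) (hs₀ : s₀ ∈ S)
    (hs₀A : ∀ k ∈ A, G.Adj k s₀ → k = cA) : IsContractibleNonEdge G a s₀ := by
  refine isContractibleNonEdge_of_preconnected hG (fun e => h.notMem_of_mem_left ha (e ▸ hs₀))
    (fun has₀ => haF (hs₀A a ha has₀ ▸ FA.center_mem_verts)) fun t => ?_
  rcases h.mem_or_mem_or_mem t with ht | ht | ht
  · exact h.preconnected_of_forall_adj_eq_center hG FA FB ha haF hs₀ hs₀A ht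
  · refine h.preconnected_of_fan hG FA ⟨t, ht⟩
      (Set.ncard_inter_le_two (.inr (.inr (h.symm.notMem_union_of_mem_left ht))))
      (Set.ncard_inter_le_two (.inl (h.notMem_union_of_mem_left ha))) ?_
    rintro x (rfl | rfl | rfl) hx
    exacts [absurd hx haF, hs₀, absurd hx (h.symm.notMem_verts FA ht)]
  · exact h.preconnected_of_forall_notMem_verts_eq hG FA ha haF huniq hs₀ ht

end IsSeparation

end Separation

lemma two_le_ncard_contractibleNonEdges [Finite V] {G : SimpleGraph V} {a b c d : V}
    (hab : IsContractibleNonEdge G a b) (hcd : IsContractibleNonEdge G c d)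
    (hne : s(a, b) ≠ s(c, d)) : 2 ≤ (contractibleNonEdges G).ncard := by
  rw [← Set.ncard_pair hne]
  exact Set.ncard_le_ncard
    (Set.insert_subset_iff.2 ⟨⟨a, b, rfl, hab⟩, Set.singleton_subset_iff.2 ⟨c, d, rfl, hcd⟩⟩)

theorem stmt5_general {V : Type*} (G : SimpleGraph V) (hG : KConnected 3 G)
    (S : Set V)
    (C1 C2 : Set V) (h1 : IsCompOf G S C1) (h2 : IsCompOf G S C2) (h12 : C1 ≠ C2)
    (hcover : C1 ∪ C2 = Sᶜ)
    (c1 c2 : V)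
    (F1 : Fan3 G (C1 ∪ S) c1 S) (F2 : Fan3 G (C2 ∪ S) c2 S)
    (hne1 : C1 ∪ S ≠ F1.verts) (hne2 : C2 ∪ S ≠ F2.verts) :
    2 ≤ (contractibleNonEdges G).ncard := by
  have := hG.finite
  have hsep := IsSeparation.of_isCompOf h1 h2 h12 hcover
  obtain ⟨w1, hw1, hw1F⟩ := F1.exists_mem_notMem_verts hne1
  obtain ⟨w2, hw2, hw2F⟩ := F2.exists_mem_notMem_verts hne2
  have hw12 := hsep.isContractibleNonEdge_of_notMem_verts hG F1 F2 hw1 hw1F hw2 hw2F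
  have hw1w2 := hsep.ne_of_mem hw1 hw2
  by_cases huniq : ∃ w ∈ C1, w ∉ F1.verts ∧ w ≠ w1
  · obtain ⟨w, hw, hwF, hww1⟩ := huniq
    exact two_le_ncard_contractibleNonEdges hw12
      (hsep.isContractibleNonEdge_of_notMem_verts hG F1 F2 hw hwF hw2 hw2F)
      (by simp [Ne.symm hww1, hw1w2])
  push Not at huniq
  by_cases hs : ∃ s ∈ S, ∀ k ∈ C1, G.Adj k s → k = c1
  · obtain ⟨s, hs, hsC1⟩ := hs
    exact two_le_ncard_contractibleNonEdges hw12
      (hsep.isContractibleNonEdge_of_forall_adj_eq_center hG F1 F2 hw1 hw1F huniq hs hsC1)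
      (by simp [hw1w2.symm, show w2 ≠ s from fun e => hsep.symm.notMem_of_mem_left hw2 (e ▸ hs)])
  push Not at hs
  exact two_le_ncard_contractibleNonEdges hw12
    (hsep.isContractibleNonEdge_center_of_forall_exists_adj hG F1 F2 hw2 hw2F hs)
    (by simp [hw1w2, show w1 ≠ c1 from fun e => hw1F (e ▸ F1.center_mem_verts)])

/-- Let `G` be a finite 3-connected graph, `S = {x, y, z}` a 3-cut of `G` such that
`G − S` consists of exactly two components `C₁` and `C₂`, and for `i = 1, 2` let `F_i`
be a fan of minimum order among all `c`–`S` fans in `G[V(C_i) ∪ S]` and among all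
vertices `c` of `C_i`. If `V(C₁) ∪ S ≠ V(F₁)` and `V(C₂) ∪ S ≠ V(F₂)`, then `G` has
at least two contractible non-edges. -/
theorem stmt5 {V : Type*} [Fintype V] (G : SimpleGraph V) (hG : KConnected 3 G)
    (x y z : V) (S : Set V) (hSdef : S = {x, y, z}) (hS3 : S.ncard = 3)
    (hScut : IsCutSet G S)
    (C1 C2 : Set V) (h1 : IsCompOf G S C1) (h2 : IsCompOf G S C2) (h12 : C1 ≠ C2)
    (hcover : C1 ∪ C2 = Sᶜ)
    (c1 c2 : V) (hc1 : c1 ∈ C1) (hc2 : c2 ∈ C2)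
    (F1 : Fan3 G (C1 ∪ S) c1 S) (F2 : Fan3 G (C2 ∪ S) c2 S)
    (hmin1 : ∀ c' ∈ C1, ∀ F' : Fan3 G (C1 ∪ S) c' S, F1.order ≤ F'.order)
    (hmin2 : ∀ c' ∈ C2, ∀ F' : Fan3 G (C2 ∪ S) c' S, F2.order ≤ F'.order)
    (hne1 : C1 ∪ S ≠ F1.verts) (hne2 : C2 ∪ S ≠ F2.verts) :
    2 ≤ (contractibleNonEdges G).ncard :=
  stmt5_general G hG S C1 C2 h1 h2 h12 hcover c1 c2 F1 F2 hne1 hne2
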